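/- Define the sesquilinear form b : dom(G) × dom(G) → ℂ by b(u,v) = (aGu, Gv)_{H₁} + (mu, v)_{H₀} and define j : dom(G) → H by j = κ ∘ π_{BD(G)}. Then b is continuous and coercive on dom(G) (there is μ > 0 with Re b(u,u) ≥ μ‖u‖²_{dom(G)} for all u ∈ dom(G)), and the Dirichlet-to-Neumann operator Λ_H in H associated with −DaG + m satisfies: for all φ, ψ ∈ H one has φ ∈ dom(Λ_H) and Λ_H φ = ψ if and only if there exists u ∈ dom(G) with j(u) = φ and b(u,v) = (ψ, j(v))_H for all v ∈ dom(G). -/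

import Mathlib

open Filter Topology

noncomputable section

namespace DtNPaper

local notation "⟪" x ", " y "⟫" => (inner ℂ x y : ℂ)

/-- Membership in the abstract boundary data space `BD(T)`: `u ∈ dom T`
(with `p = T u`, i.e. `(u, p)` in the graph of `T`) and `u` is orthogonal to
`dom T̊` with respect to the graph inner product of `dom T`. -/
def memBD {E F : Type*} [NormedAddCommGroup E] [InnerProductSpace ℂ E]
    [NormedAddCommGroup F] [InnerProductSpace ℂ F]
    (T Ti : E →ₗ.[ℂ] F) (u : E) : Prop :=
  ∃ p : F, (u, p) ∈ T.graph ∧ ∀ v w, (v, w) ∈ Ti.graph → ⟪v, u⟫ + ⟪w, p⟫ = 0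

/-- A bounded operator `M` is coercive if `Re (M x, x) ≥ μ ‖x‖²` for some `μ > 0`. -/
def Coercive {E : Type*} [NormedAddCommGroup E] [InnerProductSpace ℂ E]
    (M : E →L[ℂ] E) : Prop :=
  ∃ μ : ℝ, 0 < μ ∧ ∀ x : E, μ * ‖x‖ ^ 2 ≤ (⟪x, M x⟫).re

/-- Sequential formulation of compactness of the inclusion of `dom T`
(graph norm) into `E`. -/
def CompactIncl {E F : Type*} [NormedAddCommGroup E] [InnerProductSpace ℂ E]
    [NormedAddCommGroup F] [InnerProductSpace ℂ F] (T : E →ₗ.[ℂ] F) : Prop :=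
  ∀ (u : ℕ → E) (p : ℕ → F), (∀ n, (u n, p n) ∈ T.graph) →
    (∃ C : ℝ, ∀ n, ‖u n‖ ^ 2 + ‖p n‖ ^ 2 ≤ C) →
    ∃ φ : ℕ → ℕ, StrictMono φ ∧ ∃ x : E, Tendsto (fun j => u (φ j)) atTop (𝓝 x)

/-- The range of a partially defined linear operator, as a set. -/
def ranSet {E F : Type*} [NormedAddCommGroup E] [InnerProductSpace ℂ E]
    [NormedAddCommGroup F] [InnerProductSpace ℂ F] (T : E →ₗ.[ℂ] F) : Set F :=
  {p | ∃ u, (u, p) ∈ T.graph}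

/-- The Dirichlet-to-Neumann graph associated with `-D a G + m`:
the set of pairs `(π_{BD(G)} u, π_{BD(D)} (a G u))` where `u ∈ dom (D a G)` and
`m u - D a G u = 0`.  The orthogonal projections onto the boundary data spaces
are characterised by membership in `BD` together with the difference lying in
the domain of the corresponding minimal operator. -/
def dtnGraph {E F : Type*} [NormedAddCommGroup E] [InnerProductSpace ℂ E]
    [NormedAddCommGroup F] [InnerProductSpace ℂ F]
    (G Gi : E →ₗ.[ℂ] F) (D Di : F →ₗ.[ℂ] E)
    (a : F →L[ℂ] F) (m : E →L[ℂ] E) : Set (E × F) :=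
  {z | ∃ u p, (u, p) ∈ G.graph ∧ (a p, m u) ∈ D.graph ∧
    memBD G Gi z.1 ∧ u - z.1 ∈ Gi.domain ∧
    memBD D Di z.2 ∧ a p - z.2 ∈ Di.domain}

/-- The Dirichlet-to-Neumann graph in `H`: `(φ, ψ)` belongs to it if there is
`u₀ ∈ BD(G)` with `κ u₀ = φ` and `Λ u₀ = G (κ* ψ)`; here `k` is `κ` and
`kstarG` is the map `ψ ↦ G (κ* ψ)`. -/
def dtnGraphH {E F HS : Type*} [NormedAddCommGroup E] [InnerProductSpace ℂ E]
    [NormedAddCommGroup F] [InnerProductSpace ℂ F]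
    [NormedAddCommGroup HS] [InnerProductSpace ℂ HS]
    (G Gi : E →ₗ.[ℂ] F) (D Di : F →ₗ.[ℂ] E)
    (a : F →L[ℂ] F) (m : E →L[ℂ] E)
    (k : E → HS) (kstarG : HS → F) : Set (HS × HS) :=
  {z | ∃ u₀ : E, memBD G Gi u₀ ∧ k u₀ = z.1 ∧
    (u₀, kstarG z.2) ∈ dtnGraph G Gi D Di a m}

variable {H₀ H₁ HS : Type*}
  [NormedAddCommGroup H₀] [InnerProductSpace ℂ H₀] [CompleteSpace H₀]
  [NormedAddCommGroup H₁] [InnerProductSpace ℂ H₁] [CompleteSpace H₁]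

/-!
`BD(G)` is the orthogonal complement of the graph of `G̊ = -D*` inside the graph of `G`.
Since the graph of `G̊` is closed, every element of `dom G` splits into a `BD(G)` part and a
`dom G̊` part, and, `D` being closed, a pair orthogonal to the graph of `G̊` lies in the (swapped)
graph of `D`. As `κ* ψ ∈ BD(G)`, the functional `v ↦ (ψ, j v)` is the graph inner product with
`(κ* ψ, G κ* ψ)`, so the variational identity `b(u, ·) = (ψ, j ·)` says exactly that
`(a G u - G κ* ψ, m u - κ* ψ)` lies in the graph of `D̊ = -G*`. Because `D G κ* ψ = κ* ψ`, this
means `a G u ∈ dom D`, `D a G u = m u` and `a G u - G κ* ψ ∈ dom D̊`, which is `Λ_H φ = ψ`.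
-/

section

variable {E F : Type*} [NormedAddCommGroup E] [InnerProductSpace ℂ E]
  [NormedAddCommGroup F] [InnerProductSpace ℂ F]

theorem inner_add_inner_eq_zero_comm {x x' : E} {y y' : F} :
    ⟪x, x'⟫ + ⟪y, y'⟫ = 0 ↔ ⟪x', x⟫ + ⟪y', y⟫ = 0 := by
  rw [← inner_conj_symm x, ← inner_conj_symm y, ← map_add, map_eq_zero]

theorem mem_graph_of_graph_le {T' T : E →ₗ.[ℂ] F} (h : T'.graph ≤ T.graph) {x : E} {y : F}
    (hxy : (x, y) ∈ T.graph) (hx : x ∈ T'.domain) : (x, y) ∈ T'.graph := by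
  obtain ⟨y', hxy'⟩ := LinearPMap.mem_domain_iff.1 hx
  rwa [T.mem_graph_snd_inj hxy (h hxy') rfl]

theorem sub_mem_graph_iff {T' T : E →ₗ.[ℂ] F} (h : T'.graph ≤ T.graph) {x P : E} {y Q : F}
    (hxy : (x, y) ∈ T.graph) :
    (P - x, Q - y) ∈ T'.graph ↔ (P, Q) ∈ T.graph ∧ P - x ∈ T'.domain := by
  constructor
  · intro hT'
    refine ⟨?_, LinearPMap.mem_domain_of_mem_graph hT'⟩
    simpa using T.graph.add_mem (h hT') hxy
  · rintro ⟨hPQ, hP⟩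
    exact mem_graph_of_graph_le h (by simpa using T.graph.sub_mem hPQ hxy) hP

theorem orthogonal_of_memBD {T Ti : E →ₗ.[ℂ] F} {x : E} {y : F} (hx : memBD T Ti x)
    (hxy : (x, y) ∈ T.graph) : ∀ v w, (v, w) ∈ Ti.graph → ⟪v, x⟫ + ⟪w, y⟫ = 0 := by
  obtain ⟨y', hxy', hperp⟩ := hx
  rwa [T.mem_graph_snd_inj hxy hxy' rfl]

variable {G Gi : E →ₗ.[ℂ] F} {D Di : F →ₗ.[ℂ] E}

theorem memBD_of_mem_graph
    (hDi : ∀ q w, (q, w) ∈ Di.graph ↔ ∀ u p, (u, p) ∈ G.graph → ⟪w, u⟫ = -⟪q, p⟫)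
    {x : E} {y : F} (hxy : (x, y) ∈ G.graph) (hyx : (y, x) ∈ D.graph) : memBD D Di y :=
  ⟨x, hyx, fun q w hqw => by linear_combination (hDi q w).1 hqw x y hxy⟩

theorem inner_add_inner_eq_of_sub_mem_domain (hGiG : Gi.graph ≤ G.graph) {x : E} {y : F}
    (hperp : ∀ v w, (v, w) ∈ Gi.graph → ⟪v, x⟫ + ⟪w, y⟫ = 0) {v₀ v : E} {s₀ s : F}
    (h₀ : (v₀, s₀) ∈ G.graph) (hvs : (v, s) ∈ G.graph) (hv : v - v₀ ∈ Gi.domain) :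
    ⟪v₀, x⟫ + ⟪s₀, y⟫ = ⟪v, x⟫ + ⟪s, y⟫ := by
  have hsub := hperp _ _ <|
    mem_graph_of_graph_le hGiG (by simpa using G.graph.sub_mem hvs h₀) hv
  rw [inner_sub_left, inner_sub_left] at hsub
  linear_combination -hsub

def graphSwapL2 (D : F →ₗ.[ℂ] E) : Submodule ℂ (WithLp 2 (E × F)) :=
  D.graph.comap ((ContinuousLinearEquiv.prodComm ℂ E F).toContinuousLinearMap.comp
    (WithLp.prodContinuousLinearEquiv 2 ℂ E F).toContinuousLinearMap).toLinearMap

theorem isClosed_graphSwapL2 (hD : IsClosed (D.graph : Set (F × E))) :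
    IsClosed (graphSwapL2 D : Set (WithLp 2 (E × F))) :=
  hD.preimage (ContinuousLinearMap.continuous _)

theorem mem_orthogonal_graphSwapL2_iff
    (hGi : ∀ u w, (u, w) ∈ Gi.graph ↔ ∀ q s, (q, s) ∈ D.graph → ⟪w, q⟫ = -⟪u, s⟫)
    {z : WithLp 2 (E × F)} : z ∈ (graphSwapL2 D)ᗮ ↔ (z.fst, z.snd) ∈ Gi.graph := by
  have key : ∀ q s, ⟪(WithLp.toLp 2 (s, q) : WithLp 2 (E × F)), z⟫ = 0 ↔
      ⟪z.snd, q⟫ = -⟪z.fst, s⟫ := fun q s => by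
    rw [WithLp.prod_inner_apply, eq_neg_iff_add_eq_zero, add_comm, inner_add_inner_eq_zero_comm]
    rfl
  rw [Submodule.mem_orthogonal, hGi]
  exact ⟨fun h q s hqs => (key q s).1 (h _ hqs), fun h u hu => (key u.snd u.fst).2 (h _ _ hu)⟩

section Complete

variable [CompleteSpace E] [CompleteSpace F]
  (hGi : ∀ u w, (u, w) ∈ Gi.graph ↔ ∀ q s, (q, s) ∈ D.graph → ⟪w, q⟫ = -⟪u, s⟫)
include hGi

theorem mem_graph_swap_of_orthogonal (hD : IsClosed (D.graph : Set (F × E))) {x : E} {p : F}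
    (h : ∀ v w, (v, w) ∈ Gi.graph → ⟪v, x⟫ + ⟪w, p⟫ = 0) : (p, x) ∈ D.graph := by
  have hxp : (WithLp.toLp 2 (x, p) : WithLp 2 (E × F)) ∈ (graphSwapL2 D)ᗮᗮ :=
    (Submodule.mem_orthogonal _ _).2 fun z hz =>
      h z.fst z.snd ((mem_orthogonal_graphSwapL2_iff hGi).1 hz)
  rwa [Submodule.orthogonal_orthogonal_eq_closure,
    (isClosed_graphSwapL2 hD).submodule_topologicalClosure_eq] at hxp

theorem exists_memBD_sub_mem_domain (hGiG : Gi.graph ≤ G.graph) {v : E} {s : F}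
    (hvs : (v, s) ∈ G.graph) : ∃ v₀, memBD G Gi v₀ ∧ v - v₀ ∈ Gi.domain := by
  have : CompleteSpace (graphSwapL2 D (E := E))ᗮ :=
    (Submodule.isClosed_orthogonal _).completeSpace_coe
  have : (graphSwapL2 D (E := E))ᗮ.HasOrthogonalProjection := .ofCompleteSpace _
  obtain ⟨y, hy, z, hz, hsum⟩ :=
    (graphSwapL2 D)ᗮ.exists_add_mem_mem_orthogonal (WithLp.toLp 2 (v, s))
  rw [mem_orthogonal_graphSwapL2_iff hGi] at hy
  have hv : v = y.fst + z.fst := congrArg WithLp.fst hsum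
  have hs : s = y.snd + z.snd := congrArg WithLp.snd hsum
  have hzG : (z.fst, z.snd) ∈ G.graph := by
    simpa [hv, hs] using G.graph.sub_mem hvs (hGiG hy)
  refine ⟨z.fst, ⟨z.snd, hzG, fun v' w' hvw' => ?_⟩, ?_⟩
  · simpa using (Submodule.mem_orthogonal _ _).1 hz (WithLp.toLp 2 (v', w'))
      ((mem_orthogonal_graphSwapL2_iff hGi).2 hvw')
  · rw [hv, add_sub_cancel_right]
    exact LinearPMap.mem_domain_of_mem_graph hy

theorem forall_inner_add_inner_eq_iff_mem_graph
    (hDi : ∀ q w, (q, w) ∈ Di.graph ↔ ∀ u p, (u, p) ∈ G.graph → ⟪w, u⟫ = -⟪q, p⟫)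
    (hGiG : Gi.graph ≤ G.graph) {x : E} {y : F}
    (hperp : ∀ v w, (v, w) ∈ Gi.graph → ⟪v, x⟫ + ⟪w, y⟫ = 0) (f : E → ℂ)
    (hf : ∀ v₀ s₀, (v₀, s₀) ∈ G.graph → memBD G Gi v₀ → f v₀ = ⟪v₀, x⟫ + ⟪s₀, y⟫)
    (P : F) (Q : E) :
    (∀ v s v₀, (v, s) ∈ G.graph → memBD G Gi v₀ → v - v₀ ∈ Gi.domain →
      ⟪s, P⟫ + ⟪v, Q⟫ = f v₀) ↔ (P - y, Q - x) ∈ Di.graph := by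
  have hf' : ∀ v s v₀, (v, s) ∈ G.graph → memBD G Gi v₀ → v - v₀ ∈ Gi.domain →
      f v₀ = ⟪v, x⟫ + ⟪s, y⟫ := by
    intro v s v₀ hvs hv₀ hv
    obtain ⟨s₀, h₀, -⟩ := id hv₀
    rw [hf v₀ s₀ h₀ hv₀, inner_add_inner_eq_of_sub_mem_domain hGiG hperp h₀ hvs hv]
  have hDi' : (P - y, Q - x) ∈ Di.graph ↔
      ∀ v s, (v, s) ∈ G.graph → ⟪s, P⟫ + ⟪v, Q⟫ = ⟪v, x⟫ + ⟪s, y⟫ := by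
    refine (hDi _ _).trans <| forall₂_congr fun v s => imp_congr_right fun _ => ?_
    rw [eq_neg_iff_add_eq_zero, inner_add_inner_eq_zero_comm, inner_sub_right, inner_sub_right]
    constructor <;> intro h <;> linear_combination h
  rw [hDi']
  constructor
  · intro h v s hvs
    obtain ⟨v₀, hv₀, hv⟩ := exists_memBD_sub_mem_domain hGi hGiG hvs
    rw [h v s v₀ hvs hv₀ hv, hf' v s v₀ hvs hv₀ hv]
  · intro h v s v₀ hvs hv₀ hv
    rw [h v s hvs, hf' v s v₀ hvs hv₀ hv]

end Complete

theorem norm_inner_add_inner_le (a : F →L[ℂ] F) (m : E →L[ℂ] E) (u : E) (p : F) (v : E)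
    (s : F) : ‖⟪s, a p⟫ + ⟪v, m u⟫‖ ≤
      (‖a‖ + ‖m‖) * Real.sqrt (‖u‖ ^ 2 + ‖p‖ ^ 2) * Real.sqrt (‖v‖ ^ 2 + ‖s‖ ^ 2) := by
  have hu : ‖u‖ ≤ Real.sqrt (‖u‖ ^ 2 + ‖p‖ ^ 2) :=
    Real.le_sqrt_of_sq_le (le_add_of_nonneg_right (sq_nonneg ‖p‖))
  have hp : ‖p‖ ≤ Real.sqrt (‖u‖ ^ 2 + ‖p‖ ^ 2) :=
    Real.le_sqrt_of_sq_le (le_add_of_nonneg_left (sq_nonneg ‖u‖))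
  have hv : ‖v‖ ≤ Real.sqrt (‖v‖ ^ 2 + ‖s‖ ^ 2) :=
    Real.le_sqrt_of_sq_le (le_add_of_nonneg_right (sq_nonneg ‖s‖))
  have hs : ‖s‖ ≤ Real.sqrt (‖v‖ ^ 2 + ‖s‖ ^ 2) :=
    Real.le_sqrt_of_sq_le (le_add_of_nonneg_left (sq_nonneg ‖v‖))
  calc ‖⟪s, a p⟫ + ⟪v, m u⟫‖ ≤ ‖s‖ * (‖a‖ * ‖p‖) + ‖v‖ * (‖m‖ * ‖u‖) :=
        (norm_add_le _ _).trans <| add_le_add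
          ((norm_inner_le_norm _ _).trans (by gcongr; exact a.le_opNorm p))
          ((norm_inner_le_norm _ _).trans (by gcongr; exact m.le_opNorm u))
    _ ≤ Real.sqrt (‖v‖ ^ 2 + ‖s‖ ^ 2) * (‖a‖ * Real.sqrt (‖u‖ ^ 2 + ‖p‖ ^ 2)) +
        Real.sqrt (‖v‖ ^ 2 + ‖s‖ ^ 2) * (‖m‖ * Real.sqrt (‖u‖ ^ 2 + ‖p‖ ^ 2)) := by
      gcongr
    _ = _ := by ring

theorem exists_pos_le_re_inner_add_inner {a : F →L[ℂ] F} {m : E →L[ℂ] E} (ha : Coercive a)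
    (hm : Coercive m) :
    ∃ μ : ℝ, 0 < μ ∧ ∀ u p, μ * (‖u‖ ^ 2 + ‖p‖ ^ 2) ≤ (⟪p, a p⟫ + ⟪u, m u⟫).re := by
  obtain ⟨μa, hμa, ha⟩ := ha
  obtain ⟨μm, hμm, hm⟩ := hm
  refine ⟨min μa μm, lt_min hμa hμm, fun u p => ?_⟩
  calc min μa μm * (‖u‖ ^ 2 + ‖p‖ ^ 2) = min μa μm * ‖p‖ ^ 2 + min μa μm * ‖u‖ ^ 2 := by ring
    _ ≤ μa * ‖p‖ ^ 2 + μm * ‖u‖ ^ 2 := by gcongr <;> simp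
    _ ≤ (⟪p, a p⟫ + ⟪u, m u⟫).re := by rw [Complex.add_re]; exact add_le_add (ha p) (hm u)

end

theorem statement8_general
    (G Gi : H₀ →ₗ.[ℂ] H₁) (D Di : H₁ →ₗ.[ℂ] H₀)
    (hDclosed : IsClosed (D.graph : Set (H₁ × H₀)))
    (hGi : ∀ u w, (u, w) ∈ Gi.graph ↔ ∀ q s, (q, s) ∈ D.graph → ⟪w, q⟫ = -⟪u, s⟫)
    (hDi : ∀ q w, (q, w) ∈ Di.graph ↔ ∀ u p, (u, p) ∈ G.graph → ⟪w, u⟫ = -⟪q, p⟫)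
    (hGiG : Gi.graph ≤ G.graph) (hDiD : Di.graph ≤ D.graph)
    [NormedAddCommGroup HS] [InnerProductSpace ℂ HS] [CompleteSpace HS]
    (k : H₀ → HS) (kstar : HS → H₀) (kstarG : HS → H₁)
    (hkstar_mem : ∀ ψ : HS, (kstar ψ, kstarG ψ) ∈ G.graph ∧ memBD G Gi (kstar ψ))
    (hkstar_adj : ∀ u p (ψ : HS), (u, p) ∈ G.graph → memBD G Gi u →
      ⟪k u, ψ⟫ = ⟪u, kstar ψ⟫ + ⟪p, kstarG ψ⟫)
    (a : H₁ →L[ℂ] H₁) (m : H₀ →L[ℂ] H₀)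
    (ha : Coercive a) (hm : Coercive m) :
    -- b is continuous
    (∃ C : ℝ, ∀ u p v s, (u, p) ∈ G.graph → (v, s) ∈ G.graph →
      ‖⟪s, a p⟫ + ⟪v, m u⟫‖ ≤
        C * Real.sqrt (‖u‖ ^ 2 + ‖p‖ ^ 2) * Real.sqrt (‖v‖ ^ 2 + ‖s‖ ^ 2)) ∧
    -- b is coercive
    (∃ μ : ℝ, 0 < μ ∧ ∀ u p, (u, p) ∈ G.graph →
      μ * (‖u‖ ^ 2 + ‖p‖ ^ 2) ≤ (⟪p, a p⟫ + ⟪u, m u⟫).re) ∧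
    -- Λ_H is the operator associated with (b, j)
    (∀ φ ψ : HS, (φ, ψ) ∈ dtnGraphH G Gi D Di a m k kstarG ↔
      ∃ u p u₀, (u, p) ∈ G.graph ∧ memBD G Gi u₀ ∧ u - u₀ ∈ Gi.domain ∧
        k u₀ = φ ∧
        ∀ v s v₀, (v, s) ∈ G.graph → memBD G Gi v₀ → v - v₀ ∈ Gi.domain →
          ⟪s, a p⟫ + ⟪v, m u⟫ = ⟪k v₀, ψ⟫) := by
  refine ⟨⟨‖a‖ + ‖m‖, fun u p v s _ _ => norm_inner_add_inner_le a m u p v s⟩, ?_, fun φ ψ => ?_⟩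
  · obtain ⟨μ, hμ, hcoer⟩ := exists_pos_le_re_inner_add_inner ha hm
    exact ⟨μ, hμ, fun u p _ => hcoer u p⟩
  obtain ⟨hψG, hψBD⟩ := hkstar_mem ψ
  have hperp := orthogonal_of_memBD hψBD hψG
  have hψD : (kstarG ψ, kstar ψ) ∈ D.graph := mem_graph_swap_of_orthogonal hGi hDclosed hperp
  simp only [dtnGraphH, dtnGraph, Set.mem_ofPred_eq, memBD_of_mem_graph hDi hψG hψD, true_and,
    forall_inner_add_inner_eq_iff_mem_graph hGi hDi hGiG hperp (fun v₀ => ⟪k v₀, ψ⟫)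
      (fun v₀ s₀ h₀ hv₀ => hkstar_adj v₀ s₀ ψ h₀ hv₀), sub_mem_graph_iff hDiD hψD]
  constructor
  · rintro ⟨u₀, hu₀, rfl, u, p, hup, hD, -, hu, hdom⟩
    exact ⟨u, p, u₀, hup, hu₀, hu, rfl, hD, hdom⟩
  · rintro ⟨u, p, u₀, hup, hu₀, hu, rfl, hD, hdom⟩
    exact ⟨u₀, hu₀, rfl, u, p, hup, hD, hu₀, hu, hdom⟩

/-- Proposition 3.5: the form `b(u,v) = (a G u, G v)_{H₁} + (m u, v)_{H₀}` is
continuous and coercive on `dom G`, and the Dirichlet-to-Neumann operator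
`Λ_H` in `H` associated with `-D a G + m` is the operator associated with
`(b, j)`, where `j = κ ∘ π_{BD(G)}`. -/
theorem statement8
    (G Gi : H₀ →ₗ.[ℂ] H₁) (D Di : H₁ →ₗ.[ℂ] H₀)
    (hGdense : Dense (G.domain : Set H₀)) (hDdense : Dense (D.domain : Set H₁))
    (hGclosed : IsClosed (G.graph : Set (H₀ × H₁)))
    (hDclosed : IsClosed (D.graph : Set (H₁ × H₀)))
    (hGi : ∀ u w, (u, w) ∈ Gi.graph ↔ ∀ q s, (q, s) ∈ D.graph → ⟪w, q⟫ = -⟪u, s⟫)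
    (hDi : ∀ q w, (q, w) ∈ Di.graph ↔ ∀ u p, (u, p) ∈ G.graph → ⟪w, u⟫ = -⟪q, p⟫)
    (hGiG : Gi.graph ≤ G.graph) (hDiD : Di.graph ≤ D.graph)
    [NormedAddCommGroup HS] [InnerProductSpace ℂ HS] [CompleteSpace HS]
    (k : H₀ → HS) (kstar : HS → H₀) (kstarG : HS → H₁)
    (hk_add : ∀ u v, memBD G Gi u → memBD G Gi v → k (u + v) = k u + k v)
    (hk_smul : ∀ (c : ℂ) u, memBD G Gi u → k (c • u) = c • k u)
    (hk_bdd : ∃ C : ℝ, ∀ u p, (u, p) ∈ G.graph → memBD G Gi u →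
      ‖k u‖ ≤ C * Real.sqrt (‖u‖ ^ 2 + ‖p‖ ^ 2))
    (hk_inj : ∀ u, memBD G Gi u → k u = 0 → u = 0)
    (hk_dense : Dense (k '' {u | memBD G Gi u}))
    (hkstar_mem : ∀ ψ : HS, (kstar ψ, kstarG ψ) ∈ G.graph ∧ memBD G Gi (kstar ψ))
    (hkstar_adj : ∀ u p (ψ : HS), (u, p) ∈ G.graph → memBD G Gi u →
      ⟪k u, ψ⟫ = ⟪u, kstar ψ⟫ + ⟪p, kstarG ψ⟫)
    (a : H₁ →L[ℂ] H₁) (m : H₀ →L[ℂ] H₀)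
    (ha : Coercive a) (hm : Coercive m) :
    -- b is continuous
    (∃ C : ℝ, ∀ u p v s, (u, p) ∈ G.graph → (v, s) ∈ G.graph →
      ‖⟪s, a p⟫ + ⟪v, m u⟫‖ ≤
        C * Real.sqrt (‖u‖ ^ 2 + ‖p‖ ^ 2) * Real.sqrt (‖v‖ ^ 2 + ‖s‖ ^ 2)) ∧
    -- b is coercive
    (∃ μ : ℝ, 0 < μ ∧ ∀ u p, (u, p) ∈ G.graph →
      μ * (‖u‖ ^ 2 + ‖p‖ ^ 2) ≤ (⟪p, a p⟫ + ⟪u, m u⟫).re) ∧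
    -- Λ_H is the operator associated with (b, j)
    (∀ φ ψ : HS, (φ, ψ) ∈ dtnGraphH G Gi D Di a m k kstarG ↔
      ∃ u p u₀, (u, p) ∈ G.graph ∧ memBD G Gi u₀ ∧ u - u₀ ∈ Gi.domain ∧
        k u₀ = φ ∧
        ∀ v s v₀, (v, s) ∈ G.graph → memBD G Gi v₀ → v - v₀ ∈ Gi.domain →
          ⟪s, a p⟫ + ⟪v, m u⟫ = ⟪k v₀, ψ⟫) :=
  statement8_general G Gi D Di hDclosed hGi hDi hGiG hDiD k kstar kstarG hkstar_mem hkstar_adj a m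
    ha hm

end DtNPaper
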